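/- Let I ⊆ ℝ be an open interval, b, c, f₄ : ℝ → ℝ with c(x) ≠ 0 on I, suppose q(x) = f₄(x)/c(x) is differentiable on I, and define a(x) = (1/(4c(x)))·[ 2c(x)·q'(x) − f₄(x)² − 2b(x)f₄(x) ]. Let B be differentiable on I with B'(x) = b(x) + f₄(x), and G differentiable on I with G'(x) = c(x)·exp(B(x)). Then for every constant C₁₀ ∈ ℝ, the function y(x) = f₄(x)/(2c(x)) + exp(B(x))/(C₁₀ − G(x)) satisfies y'(x) = a(x) + b(x)y(x) + c(x)y(x)² at every x ∈ I with C₁₀ − G(x) ≠ 0. -/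

import Mathlib

/-!
The function `y₀ = f₄/(2c)` is itself a particular solution: the defining formula for `a` says
exactly `a + b y₀ + c y₀² = (f₄/c)'/2 = y₀'`. Writing `y = y₀ + u` turns the Riccati equation into
the Bernoulli equation `u' = (b + 2c y₀) u + c u² = (b + f₄) u + c u²`, which is solved by
`u = exp B / (C₁₀ - G)` because `G' = c exp B`.
-/

def SolvesRiccatiAt (a b c y : ℝ → ℝ) (x : ℝ) : Prop :=
  HasDerivAt y (a x + b x * y x + c x * y x ^ 2) x

theorem SolvesRiccatiAt.add {a b c y₀ u : ℝ → ℝ} {x : ℝ} (hy₀ : SolvesRiccatiAt a b c y₀ x)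
    (hu : HasDerivAt u ((b x + 2 * c x * y₀ x) * u x + c x * u x ^ 2) x) :
    SolvesRiccatiAt a b c (fun t => y₀ t + u t) x :=
  (HasDerivAt.add hy₀ hu).congr_deriv (by ring)

theorem hasDerivAt_exp_div_const_sub {B G β c : ℝ → ℝ} {C x : ℝ}
    (hB : HasDerivAt B (β x) x) (hG : HasDerivAt G (c x * Real.exp (B x)) x)
    (hne : C - G x ≠ 0) :
    HasDerivAt (fun t => Real.exp (B t) / (C - G t))
      (β x * (Real.exp (B x) / (C - G x)) + c x * (Real.exp (B x) / (C - G x)) ^ 2) x :=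
  (hB.exp.div (hG.const_sub C) hne).congr_deriv (by field_simp; ring)

theorem solvesRiccatiAt_div_two_mul {a b c f₄ q' : ℝ → ℝ} {x : ℝ} (hc : c x ≠ 0)
    (hq : HasDerivAt (fun t => f₄ t / c t) (q' x) x)
    (ha : a x = (1 / (4 * c x)) * (2 * c x * q' x - f₄ x ^ 2 - 2 * b x * f₄ x)) :
    SolvesRiccatiAt a b c (fun t => f₄ t / (2 * c t)) x := by
  have hfun : (fun t => f₄ t / (2 * c t)) = fun t => f₄ t / c t / 2 := by
    funext t
    rw [div_div, mul_comm]
  unfold SolvesRiccatiAt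
  rw [hfun]
  refine (hq.div_const 2).congr_deriv ?_
  rw [ha]
  field_simp
  ring

/-- Theorem 7 (Case 7): with `f₄/c` differentiable with derivative `q'`,
`a = (1/(4c))[2c·q' − f₄² − 2bf₄]`, `B' = b + f₄` and `G' = c · exp B`, the
function `y = f₄/(2c) + exp B / (C₁₀ − G)` solves the Riccati equation
wherever `C₁₀ − G ≠ 0`. -/
theorem riccati_case7_general
    (p q : ℝ) (a b c f₄ q' B G : ℝ → ℝ)
    (hc : ∀ x ∈ Set.Ioo p q, c x ≠ 0)
    (hq : ∀ x ∈ Set.Ioo p q, HasDerivAt (fun t => f₄ t / c t) (q' x) x)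
    (ha : ∀ x ∈ Set.Ioo p q,
      a x = (1 / (4 * c x)) * (2 * c x * q' x - f₄ x ^ 2 - 2 * b x * f₄ x))
    (hB : ∀ x ∈ Set.Ioo p q, HasDerivAt B (b x + f₄ x) x)
    (hG : ∀ x ∈ Set.Ioo p q, HasDerivAt G (c x * Real.exp (B x)) x)
    (C₁₀ : ℝ) :
    ∀ x ∈ Set.Ioo p q, C₁₀ - G x ≠ 0 →
      HasDerivAt (fun t => f₄ t / (2 * c t) + Real.exp (B t) / (C₁₀ - G t))
        (a x + b x * (f₄ x / (2 * c x) + Real.exp (B x) / (C₁₀ - G x))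
          + c x * (f₄ x / (2 * c x) + Real.exp (B x) / (C₁₀ - G x)) ^ 2) x := by
  intro x hx hne
  have hy₀ := solvesRiccatiAt_div_two_mul (hc x hx) (hq x hx) (ha x hx)
  have hshift : b x + 2 * c x * (f₄ x / (2 * c x)) = b x + f₄ x := by
    field_simp [hc x hx]
  have hu := hasDerivAt_exp_div_const_sub (β := fun t => b t + f₄ t) (hB x hx) (hG x hx) hne
  exact hy₀.add (hshift ▸ hu)
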